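/- The series Σ_{k=1}^∞ 72H_k²/((k+1)(k+2)(k+3)(k+4)) converges to 2π²/3 − 41/9, and the series Σ_{k=1}^∞ 72H̄_k/((k+1)(k+2)(k+3)(k+4)) converges to 2π²/3 − 49/9. -/
import Mathlib


open Finset

/-- `n`-th harmonic number. -/
noncomputable def H (n : ℕ) : ℝ := ∑ k ∈ Finset.Icc 1 n, (1 : ℝ) / k

/-- Second-order harmonic number. -/
noncomputable def Hbar (n : ℕ) : ℝ := ∑ k ∈ Finset.Icc 1 n, (1 : ℝ) / (k : ℝ) ^ 2

lemma H_succ (n : ℕ) : H (n + 1) = H n + 1 / ((n : ℝ) + 1) := by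
  unfold H
  rw [Finset.sum_Icc_succ_top (by omega : 1 ≤ n + 1)]
  push_cast
  ring

lemma Hbar_succ (n : ℕ) : Hbar (n + 1) = Hbar n + 1 / ((n : ℝ) + 1) ^ 2 := by
  unfold Hbar
  rw [Finset.sum_Icc_succ_top (by omega : 1 ≤ n + 1)]
  push_cast
  ring

lemma H_nonneg (n : ℕ) : 0 ≤ H n := by
  unfold H
  exact Finset.sum_nonneg fun k _ => by positivity

lemma Hbar_nonneg (n : ℕ) : 0 ≤ Hbar n := by
  unfold Hbar
  exact Finset.sum_nonneg fun k _ => by positivity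

lemma H_le (n : ℕ) : H n ≤ n := by
  induction n with
  | zero => simp [H]
  | succ n ih =>
      rw [H_succ]
      push_cast
      have h1 : 1 / ((n : ℝ) + 1) ≤ 1 := by
        rw [div_le_one (by positivity)]
        linarith [Nat.cast_nonneg (α := ℝ) n]
      linarith

/-- remainder term 1 -/
noncomputable def t1 (N : ℕ) : ℝ :=
  24 * (H N) ^ 2 / (((N : ℝ) + 2) * ((N : ℝ) + 3) * ((N : ℝ) + 4))

/-- remainder term 2 -/
noncomputable def t2 (N : ℕ) : ℝ :=
  16 * H N / (((N : ℝ) + 1) * ((N : ℝ) + 2) * ((N : ℝ) + 3))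

/-- remainder term 3a -/
noncomputable def t3 (N : ℕ) : ℝ :=
  2 * (6 * (N : ℝ) ^ 2 + 33 * (N : ℝ) + 41) /
    (3 * (((N : ℝ) + 1) * ((N : ℝ) + 2) * ((N : ℝ) + 3)))

/-- remainder term Hbar -/
noncomputable def t5 (N : ℕ) : ℝ :=
  24 * Hbar N / (((N : ℝ) + 2) * ((N : ℝ) + 3) * ((N : ℝ) + 4))

/-- remainder term 3b -/
noncomputable def t4 (N : ℕ) : ℝ :=
  2 * (6 * (N : ℝ) ^ 2 + 33 * (N : ℝ) + 49) /
    (3 * (((N : ℝ) + 1) * ((N : ℝ) + 2) * ((N : ℝ) + 3)))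

lemma partial_sum_1 (N : ℕ) :
    ∑ k ∈ Finset.range N,
      72 * (H (k + 1)) ^ 2 /
        (((k : ℝ) + 2) * ((k : ℝ) + 3) * ((k : ℝ) + 4) * ((k : ℝ) + 5)) =
    -41 / 9 + 4 * Hbar N - t1 N - t2 N + t3 N := by
  induction N with
  | zero => norm_num [H, Hbar, t1, t2, t3]
  | succ N ih =>
      rw [Finset.sum_range_succ, ih]
      unfold t1 t2 t3
      rw [H_succ, Hbar_succ]
      push_cast
      have h1 : (N : ℝ) + 1 ≠ 0 := by positivity
      have h2 : (N : ℝ) + 2 ≠ 0 := by positivity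
      have h3 : (N : ℝ) + 3 ≠ 0 := by positivity
      have h4 : (N : ℝ) + 4 ≠ 0 := by positivity
      have h5 : (N : ℝ) + 5 ≠ 0 := by positivity
      field_simp
      ring

lemma partial_sum_2 (N : ℕ) :
    ∑ k ∈ Finset.range N,
      72 * Hbar (k + 1) /
        (((k : ℝ) + 2) * ((k : ℝ) + 3) * ((k : ℝ) + 4) * ((k : ℝ) + 5)) =
    -49 / 9 + 4 * Hbar N - t5 N + t4 N := by
  induction N with
  | zero => norm_num [Hbar, t4, t5]
  | succ N ih =>
      rw [Finset.sum_range_succ, ih]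
      unfold t4 t5
      rw [Hbar_succ]
      push_cast
      have h1 : (N : ℝ) + 1 ≠ 0 := by positivity
      have h2 : (N : ℝ) + 2 ≠ 0 := by positivity
      have h3 : (N : ℝ) + 3 ≠ 0 := by positivity
      have h4 : (N : ℝ) + 4 ≠ 0 := by positivity
      have h5 : (N : ℝ) + 5 ≠ 0 := by positivity
      field_simp
      ring

open Filter Topology

lemma tendsto_shift : Tendsto (fun N : ℕ => ((N : ℝ) + 2)) atTop atTop :=
  tendsto_atTop_add_const_right _ 2 tendsto_natCast_atTop_atTop

lemma tendsto_t1 : Tendsto t1 atTop (𝓝 0) := by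
  apply squeeze_zero (fun N => by unfold t1; positivity)
    (g := fun N : ℕ => 24 / ((N : ℝ) + 2))
  · intro N
    unfold t1
    have hH := H_nonneg N
    have hHle := H_le N
    have hsq : (H N) ^ 2 ≤ (N : ℝ) ^ 2 := by nlinarith
    rw [div_le_div_iff₀ (by positivity) (by positivity)]
    nlinarith [Nat.cast_nonneg (α := ℝ) N]
  · exact tendsto_const_nhds.div_atTop tendsto_shift

lemma tendsto_t2 : Tendsto t2 atTop (𝓝 0) := by
  apply squeeze_zero (fun N => by have := H_nonneg N; unfold t2; positivity)
    (g := fun N : ℕ => 16 / ((N : ℝ) + 2))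
  · intro N
    unfold t2
    have hH := H_nonneg N
    have hHle := H_le N
    rw [div_le_div_iff₀ (by positivity) (by positivity)]
    have key := mul_le_mul_of_nonneg_right hHle (show (0:ℝ) ≤ (N:ℝ)+2 by positivity)
    nlinarith [Nat.cast_nonneg (α := ℝ) N, sq_nonneg ((N:ℝ)+2), key]
  · exact tendsto_const_nhds.div_atTop tendsto_shift

lemma Hbar_le (n : ℕ) : Hbar n ≤ n := by
  induction n with
  | zero => simp [Hbar]
  | succ n ih =>
      rw [Hbar_succ]
      push_cast
      have h1 : 1 / ((n : ℝ) + 1) ^ 2 ≤ 1 := by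
        rw [div_le_one (by positivity)]
        nlinarith [Nat.cast_nonneg (α := ℝ) n]
      linarith

lemma tendsto_t5 : Tendsto t5 atTop (𝓝 0) := by
  apply squeeze_zero (fun N => by have := Hbar_nonneg N; unfold t5; positivity)
    (g := fun N : ℕ => 24 / ((N : ℝ) + 2))
  · intro N
    unfold t5
    have hH := Hbar_nonneg N
    have hHle := Hbar_le N
    rw [div_le_div_iff₀ (by positivity) (by positivity)]
    have key := mul_le_mul_of_nonneg_right hHle (show (0:ℝ) ≤ (N:ℝ)+2 by positivity)
    nlinarith [Nat.cast_nonneg (α := ℝ) N, sq_nonneg ((N:ℝ)+2), key]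
  · exact tendsto_const_nhds.div_atTop tendsto_shift

lemma tendsto_t3 : Tendsto t3 atTop (𝓝 0) := by
  apply squeeze_zero (fun N => by unfold t3; positivity)
    (g := fun N : ℕ => 41 / ((N : ℝ) + 2))
  · intro N
    unfold t3
    rw [div_le_div_iff₀ (by positivity) (by positivity)]
    nlinarith [Nat.cast_nonneg (α := ℝ) N]
  · exact tendsto_const_nhds.div_atTop tendsto_shift

lemma tendsto_t4 : Tendsto t4 atTop (𝓝 0) := by
  apply squeeze_zero (fun N => by unfold t4; positivity)
    (g := fun N : ℕ => 49 / ((N : ℝ) + 2))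
  · intro N
    unfold t4
    rw [div_le_div_iff₀ (by positivity) (by positivity)]
    nlinarith [Nat.cast_nonneg (α := ℝ) N]
  · exact tendsto_const_nhds.div_atTop tendsto_shift

lemma Hbar_eq_range (N : ℕ) : Hbar N = ∑ k ∈ Finset.range (N + 1), (1 : ℝ) / (k : ℝ) ^ 2 := by
  induction N with
  | zero => simp [Hbar]
  | succ N ih =>
      rw [Finset.sum_range_succ, Hbar_succ, ih]
      push_cast
      ring

lemma tendsto_Hbar : Tendsto Hbar atTop (𝓝 (Real.pi ^ 2 / 6)) := by
  have h := hasSum_zeta_two.tendsto_sum_nat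
  have h2 := h.comp (tendsto_add_atTop_nat 1)
  convert h2 using 1
  funext N
  exact Hbar_eq_range N

theorem sum_H_sq_and_Hbar_over_four_factors :
    HasSum (fun k : ℕ =>
        72 * (H (k + 1)) ^ 2 /
          (((k : ℝ) + 2) * ((k : ℝ) + 3) * ((k : ℝ) + 4) * ((k : ℝ) + 5)))
      (2 * Real.pi ^ 2 / 3 - 41 / 9) ∧
    HasSum (fun k : ℕ =>
        72 * Hbar (k + 1) /
          (((k : ℝ) + 2) * ((k : ℝ) + 3) * ((k : ℝ) + 4) * ((k : ℝ) + 5)))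
      (2 * Real.pi ^ 2 / 3 - 49 / 9) := by
  constructor
  · rw [hasSum_iff_tendsto_nat_of_nonneg (fun k => by
      have := H_nonneg (k + 1); positivity)]
    simp only [partial_sum_1]
    have h : Tendsto (fun N : ℕ => -41 / 9 + 4 * Hbar N - t1 N - t2 N + t3 N) atTop
        (𝓝 (-41 / 9 + 4 * (Real.pi ^ 2 / 6) - 0 - 0 + 0)) :=
      (((tendsto_const_nhds.add (tendsto_Hbar.const_mul 4)).sub tendsto_t1).sub
        tendsto_t2).add tendsto_t3
    convert h using 2
    ring
  · rw [hasSum_iff_tendsto_nat_of_nonneg (fun k => by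
      have := Hbar_nonneg (k + 1); positivity)]
    simp only [partial_sum_2]
    have h : Tendsto (fun N : ℕ => -49 / 9 + 4 * Hbar N - t5 N + t4 N) atTop
        (𝓝 (-49 / 9 + 4 * (Real.pi ^ 2 / 6) - 0 + 0)) :=
      ((tendsto_const_nhds.add (tendsto_Hbar.const_mul 4)).sub tendsto_t5).add tendsto_t4
    convert h using 2
    ring
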